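/- arXiv:2408.11136 — 3 statements merged into one kernel-verified Lean document; each statement's English description precedes it below -/
import Mathlib

section
/- Let m be a natural number, r > 0, and let P ⊆ ℂ^m be an open set. Let f be a holomorphic function on (D_r ∖ {0}) × P, where D_r = {t ∈ ℂ : |t| < r}. Assume that for every a ∈ P the one-variable function t ↦ f(t,a), defined on D_r ∖ {0}, extends to a holomorphic function on D_r. Then f extends to a holomorphic function on D_r × P; that is, there exists a holomorphic function F : D_r × P → ℂ agreeing with f on (D_r ∖ {0}) × P. -/
/-!
Away from `t = 0` there is nothing to do. Near `t = 0` the extension is the Cauchy integral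
`(2πi)⁻¹ ∮_{|z| = ρ} f(z, a) / (z - t) dz`: by the one-variable Cauchy formula it equals the
holomorphic extension of the slice `f(·, a)` at `t`, and it is jointly holomorphic in `(t, a)`
since it may be differentiated under the integral sign, the derivatives in the parameter being
bounded uniformly along the circle by Cauchy estimates.
-/

open Metric Set Filter Topology MeasureTheory

theorem norm_fderiv_le_of_forall_mem_closedBall_norm_le {E F : Type*}
    [NormedAddCommGroup E] [NormedSpace ℂ E] [NormedAddCommGroup F] [NormedSpace ℂ F]
    {f : E → F} {q : E} {δ M : ℝ} (hδ : 0 < δ) (hf : DifferentiableOn ℂ f (closedBall q δ))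
    (hM : ∀ x ∈ closedBall q δ, ‖f x‖ ≤ M) :
    ‖fderiv ℂ f q‖ ≤ M / δ := by
  have hM₀ : 0 ≤ M := (norm_nonneg _).trans (hM q (mem_closedBall_self hδ.le))
  refine ContinuousLinearMap.opNorm_le_bound _ (by positivity) fun v => ?_
  rcases eq_or_ne v 0 with rfl | hv
  · simp
  have hv₀ : 0 < ‖v‖ := norm_pos_iff.2 hv
  have hline : ∀ s : ℂ, HasDerivAt (fun s : ℂ => q + s • v) v s := fun s => by
    simpa using ((hasDerivAt_id s).smul_const v).const_add q
  have hmaps : MapsTo (fun s : ℂ => q + s • v) (closedBall 0 (δ / ‖v‖)) (closedBall q δ) := by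
    intro s hs
    rw [mem_closedBall_zero_iff, le_div_iff₀ hv₀] at hs
    simpa [norm_smul] using hs
  have hg : DiffContOnCl ℂ (fun s : ℂ => f (q + s • v)) (ball 0 (δ / ‖v‖)) :=
    (hf.comp (fun s _ => (hline s).differentiableAt.differentiableWithinAt) hmaps).diffContOnCl_ball
      subset_rfl
  have hderiv : HasDerivAt (fun s : ℂ => f (q + s • v)) (fderiv ℂ f q v) 0 := by
    have hfq := (hf.differentiableAt (closedBall_mem_nhds q hδ)).hasFDerivAt
    exact (by simpa using hfq : HasFDerivAt f (fderiv ℂ f q) (q + (0 : ℂ) • v)).comp_hasDerivAt 0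
      (hline 0)
  calc ‖fderiv ℂ f q v‖ = ‖deriv (fun s : ℂ => f (q + s • v)) 0‖ := by rw [hderiv.deriv]
    _ ≤ M / (δ / ‖v‖) := Complex.norm_deriv_le_of_forall_mem_sphere_norm_le (by positivity) hg
        fun s hs => hM _ (hmaps (sphere_subset_closedBall hs))
    _ = M / δ * ‖v‖ := by field_simp

theorem exists_ball_forall_norm_fderiv_slice_le {Z H F : Type*} [TopologicalSpace Z]
    [NormedAddCommGroup H] [NormedSpace ℂ H] [ProperSpace H]
    [NormedAddCommGroup F] [NormedSpace ℂ F]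
    {h : Z × H → F} {K : Set Z} (hK : IsCompact K) {V : Set H} (hV : IsOpen V)
    (hcont : ContinuousOn h (K ×ˢ V)) (hdiff : ∀ z ∈ K, DifferentiableOn ℂ (fun p => h (z, p)) V)
    {p₀ : H} (hp₀ : p₀ ∈ V) :
    ∃ δ > 0, ball p₀ δ ⊆ V ∧
      ∃ C, ∀ z ∈ K, ∀ p ∈ ball p₀ δ, ‖fderiv ℂ (fun q => h (z, q)) p‖ ≤ C := by
  obtain ⟨δ, hδ, hδV⟩ : ∃ δ > 0, closedBall p₀ (2 * δ) ⊆ V := by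
    obtain ⟨ε, hε, hεV⟩ := nhds_basis_closedBall.mem_iff.1 (hV.mem_nhds hp₀)
    exact ⟨ε / 2, by positivity, by rwa [mul_div_cancel₀ _ two_ne_zero]⟩
  obtain ⟨M, hM⟩ : ∃ M, ∀ q ∈ K ×ˢ closedBall p₀ (2 * δ), ‖h q‖ ≤ M :=
    (hK.prod (isCompact_closedBall p₀ _)).exists_bound_of_continuousOn
      (hcont.mono (prod_mono subset_rfl hδV))
  have hball : ball p₀ δ ⊆ V :=
    ball_subset_closedBall.trans ((closedBall_subset_closedBall (by linarith)).trans hδV)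
  refine ⟨δ, hδ, hball, M / δ, fun z hz p hp => ?_⟩
  have hsub : closedBall p δ ⊆ closedBall p₀ (2 * δ) :=
    closedBall_subset_closedBall' (by linarith [mem_ball.1 hp])
  exact norm_fderiv_le_of_forall_mem_closedBall_norm_le hδ ((hdiff z hz).mono (hsub.trans hδV))
    fun q hq => hM (z, q) ⟨hz, hsub hq⟩

theorem differentiableOn_circleIntegral_of_differentiableAt {H : Type*} [NormedAddCommGroup H]
    [NormedSpace ℂ H] [FiniteDimensional ℂ H] {h : ℂ × H → ℂ} {c : ℂ} {R : ℝ} (hR : 0 ≤ R)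
    {V : Set H} (hV : IsOpen V) (hh : ∀ z ∈ sphere c R, ∀ p ∈ V, DifferentiableAt ℂ h (z, p)) :
    DifferentiableOn ℂ (fun p => ∮ z in C(c, R), h (z, p)) V := by
  have hpartial : ∀ z ∈ sphere c R, ∀ p ∈ V,
      HasFDerivAt (fun q => h (z, q)) ((fderiv ℂ h (z, p)).comp (.inr ℂ ℂ H)) p :=
    fun z hz p hp => (hh z hz p hp).hasFDerivAt.comp p (hasFDerivAt_prodMk_right z p)
  intro p₀ hp₀
  obtain ⟨δ, hδ, hδV, C, hC⟩ := exists_ball_forall_norm_fderiv_slice_le (isCompact_sphere c R) hV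
    (fun q hq => (hh q.1 hq.1 q.2 hq.2).continuousAt.continuousWithinAt)
    (fun z hz p hp => (hpartial z hz p hp).differentiableAt.differentiableWithinAt) hp₀
  have hcirc : ∀ θ, circleMap c R θ ∈ sphere c R := circleMap_mem_sphere c hR
  have hcont : ∀ p ∈ V, Continuous fun θ => h (circleMap c R θ, p) := fun p hp =>
    continuous_iff_continuousAt.2 fun θ => ContinuousAt.comp (g := h)
      (hh _ (hcirc θ) p hp).continuousAt
      ((continuous_circleMap c R).prodMk continuous_const).continuousAt
  have hderiv_cont : Continuous (deriv (circleMap c R)) := by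
    simp only [funext (deriv_circleMap c R)]
    fun_prop
  have hmeas : Measurable fun θ => fderiv ℂ (fun q => h (circleMap c R θ, q)) p₀ := by
    -- Measurability of `fderiv` is known for a single function, here the joint `fderiv ℂ h`.
    simp only [fun θ => (hpartial _ (hcirc θ) p₀ hp₀).fderiv]
    borelize (ℂ × H)
    exact ((ContinuousLinearMap.compL ℂ H (ℂ × H) ℂ).flip (.inr ℂ ℂ H)).continuous.measurable.comp
      ((measurable_fderiv ℂ h).comp ((continuous_circleMap c R).prodMk continuous_const).measurable)
  simp only [circleIntegral_def_Icc]
  refine (hasFDerivAt_integral_of_dominated_of_fderiv_le (bound := fun _ => R * C)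
    (F' := fun p θ => deriv (circleMap c R) θ • fderiv ℂ (fun q => h (circleMap c R θ, q)) p)
    (ball_mem_nhds p₀ hδ) ?_ ?_ ?_ ?_ ?_ ?_).differentiableAt.differentiableWithinAt
  · filter_upwards [ball_mem_nhds p₀ hδ] with p hp
    exact (hderiv_cont.smul (hcont p (hδV hp))).aestronglyMeasurable
  · exact (hderiv_cont.smul (hcont p₀ hp₀)).integrableOn_Icc
  · exact hderiv_cont.aestronglyMeasurable.smul hmeas.aestronglyMeasurable
  · refine ae_of_all _ fun θ p hp => ?_
    rw [norm_smul, deriv_circleMap, norm_mul, norm_circleMap_zero, Complex.norm_I, mul_one,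
      abs_of_nonneg hR]
    exact mul_le_mul_of_nonneg_left (hC _ (hcirc θ) p hp) hR
  · exact integrableOn_const measure_Icc_lt_top.ne
  · exact ae_of_all _ fun θ p hp =>
      ((hpartial _ (hcirc θ) p (hδV hp)).differentiableAt.hasFDerivAt).const_smul
        (deriv (circleMap c R) θ)

theorem differentiableOn_circleIntegral_sub_inv_smul {E : Type*} [NormedAddCommGroup E]
    [NormedSpace ℂ E] [FiniteDimensional ℂ E] {f : ℂ × E → ℂ} {c : ℂ} {R : ℝ} (hR : 0 ≤ R)
    {U : Set E} (hU : IsOpen U) (hf : ∀ z ∈ sphere c R, ∀ a ∈ U, DifferentiableAt ℂ f (z, a)) :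
    DifferentiableOn ℂ (fun p : ℂ × E => ∮ z in C(c, R), (z - p.1)⁻¹ • f (z, p.2))
      (ball c R ×ˢ U) := by
  have hkernel : ∀ z ∈ sphere c R, ∀ p ∈ ball c R ×ˢ U, DifferentiableAt ℂ
      (fun q : ℂ × (ℂ × E) => (q.1 - q.2.1)⁻¹ • f (q.1, q.2.2)) (z, p) := by
    intro z hz p hp
    have hne : z - p.1 ≠ 0 := sub_ne_zero.2 fun h => (mem_sphere.1 hz ▸ mem_ball.1 (h ▸ hp.1)).false
    have hinv : DifferentiableAt ℂ (fun q : ℂ × (ℂ × E) => (q.1 - q.2.1)⁻¹) (z, p) :=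
      (differentiableAt_fst.sub differentiableAt_snd.fst).inv hne
    have hslice : DifferentiableAt ℂ (fun q : ℂ × (ℂ × E) => f (q.1, q.2.2)) (z, p) :=
      (hf z hz p.2 hp.2).comp (z, p) (differentiableAt_fst.prodMk differentiableAt_snd.snd)
    exact hinv.smul hslice
  exact differentiableOn_circleIntegral_of_differentiableAt hR (isOpen_ball.prod hU) hkernel

theorem differentiableOn_ball_prod_of_eqOn_sphere {E : Type*} [NormedAddCommGroup E]
    [NormedSpace ℂ E] [FiniteDimensional ℂ E] {f : ℂ × E → ℂ} {g : E → ℂ → ℂ} {c : ℂ} {R : ℝ}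
    (hR : 0 ≤ R) {U : Set E} (hU : IsOpen U)
    (hf : ∀ z ∈ sphere c R, ∀ a ∈ U, DifferentiableAt ℂ f (z, a))
    (hg : ∀ a ∈ U, DifferentiableOn ℂ (g a) (closedBall c R))
    (hgf : ∀ a ∈ U, EqOn (g a) (fun z => f (z, a)) (sphere c R)) :
    DifferentiableOn ℂ (fun p : ℂ × E => g p.2 p.1) (ball c R ×ˢ U) := by
  refine ((differentiableOn_circleIntegral_sub_inv_smul hR hU hf).const_smul
    (2 * Real.pi * Complex.I)⁻¹).congr fun p hp => ?_
  rw [Pi.smul_apply, circleIntegral.integral_congr hR fun z hz => congrArg _ (hgf p.2 hp.2 hz).symm,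
    (hg p.2 hp.2).circleIntegral_sub_inv_smul hp.1, inv_smul_smul₀ Complex.two_pi_I_ne_zero]

/-- Purely even case of the lemma on regular extension of holomorphic functions
across the divisor `t = 0`: if `f` is holomorphic on `(D_r \ {0}) × P` and for every
`a ∈ P` the slice `t ↦ f (t, a)` extends holomorphically over `D_r`, then `f` extends
to a holomorphic function on `D_r × P`. -/
theorem stmt0 (m : ℕ) (r : ℝ) (hr : 0 < r) (P : Set (Fin m → ℂ)) (hP : IsOpen P)
    (f : ℂ × (Fin m → ℂ) → ℂ)
    (hf : DifferentiableOn ℂ f ((ball (0 : ℂ) r \ {0}) ×ˢ P))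
    (hext : ∀ a ∈ P, ∃ g : ℂ → ℂ, DifferentiableOn ℂ g (ball (0 : ℂ) r) ∧
      ∀ t ∈ ball (0 : ℂ) r \ {0}, g t = f (t, a)) :
    ∃ F : ℂ × (Fin m → ℂ) → ℂ, DifferentiableOn ℂ F (ball (0 : ℂ) r ×ˢ P) ∧
      ∀ p ∈ (ball (0 : ℂ) r \ {0}) ×ˢ P, F p = f p := by
  choose! g hg hgf using hext
  obtain ⟨ρ, hρ, hρr⟩ : ∃ ρ, 0 < ρ ∧ ρ < r := ⟨r / 2, half_pos hr, half_lt_self hr⟩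
  have hS : IsOpen ((ball (0 : ℂ) r \ {0}) ×ˢ P) := (isOpen_ball.sdiff isClosed_singleton).prod hP
  have hsphere : sphere (0 : ℂ) ρ ⊆ ball 0 r \ {0} := fun z hz =>
    ⟨sphere_subset_ball hρr hz, ne_of_mem_sphere hz hρ.ne'⟩
  have hG : DifferentiableOn ℂ (fun p => g p.2 p.1) (ball 0 ρ ×ˢ P) :=
    differentiableOn_ball_prod_of_eqOn_sphere hρ.le hP
      (fun z hz a ha => hf.differentiableAt (hS.mem_nhds ⟨hsphere hz, ha⟩))
      (fun a ha => (hg a ha).mono (closedBall_subset_ball hρr))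
      fun a ha z hz => hgf a ha z (hsphere hz)
  set F : ℂ × (Fin m → ℂ) → ℂ := fun p => if p.1 = 0 then g p.2 p.1 else f p
  have hFf : EqOn F f ((ball 0 r \ {0}) ×ˢ P) := fun p hp => if_neg hp.1.2
  have hFg : EqOn F (fun p => g p.2 p.1) (ball 0 ρ ×ˢ P) := fun p hp => by
    by_cases hp0 : p.1 = 0
    · exact if_pos hp0
    · exact (if_neg hp0).trans (hgf p.2 hp.2 p.1 ⟨ball_subset_ball hρr.le hp.1, hp0⟩).symm
  refine ⟨F, ((hG.congr hFg).union_of_isOpen (hf.congr hFf) (isOpen_ball.prod hP) hS).mono ?_, hFf⟩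
  rintro ⟨t, a⟩ ⟨ht, ha⟩
  rcases eq_or_ne t 0 with rfl | ht0
  exacts [Or.inl ⟨mem_ball_self hρ, ha⟩, Or.inr ⟨⟨ht, ht0⟩, ha⟩]
end

section
/- Fix τ in the complex upper half-plane, let Λ = ℤ + τℤ ⊂ ℂ, and let u be a half-period. Then there exist ε > 0 and a holomorphic function κ on the punctured disc {z ∈ ℂ : 0 < |z| < ε} such that κ(z)² = ℘(z) − ℘(u) for all such z and z·κ(z) → 1 as z → 0. Moreover any such κ satisfies κ(z) = 1/z − (℘(u)/2)·z + O(|z|³) and ℘(z) + κ′(z) = −℘(u)/2 + O(|z|²) as z → 0. -/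
open Filter Topology Asymptotics Metric

/-- The lattice `Λ = ℤ + τℤ ⊂ ℂ`. -/
def lattice (τ : ℂ) : Set ℂ := {z | ∃ m n : ℤ, z = (m : ℂ) + (n : ℂ) * τ}

/-- The Weierstrass `℘`-function of the lattice `ℤ + τℤ`. -/
noncomputable def wp (τ : ℂ) (z : ℂ) : ℂ :=
  1 / z ^ 2 + ∑' ω : {w : ℂ // w ∈ lattice τ ∧ w ≠ 0},
    (1 / (z - (ω : ℂ)) ^ 2 - 1 / (ω : ℂ) ^ 2)


/-!
The regular part `℘(z) - 1/z²` is holomorphic and even near `0` and vanishes there, so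
`℘(z) = 1/z² + z²G(z)` with `G` holomorphic at `0`. Hence `z²(℘(z) - c) = 1 - cz² + z⁴G(z)`
has a holomorphic square root `ψ` near `0` with `ψ(0) = 1`, and `κ = ψ/z` does the job.
Any other `κ` has `(zκ)² = ψ²` and `zκ → 1 = ψ(0)`, so it coincides with `ψ/z` near `0`.
The expansions come from `ψ - (1 - cz²/2) = z⁴(G - c²/4)/(ψ + 1 - cz²/2)`.
-/

section

variable {𝕜 E : Type*} [NontriviallyNormedField 𝕜] [NormedAddCommGroup E]
  [NormedSpace 𝕜 E]

lemma deriv_zero_of_even [CharZero 𝕜] {f : 𝕜 → E} (hf : ∀ x, f (-x) = f x) : deriv f 0 = 0 := by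
  have h := deriv_comp_neg (f := f) (x := 0)
  rw [show (fun x => f (-x)) = f from funext hf, neg_zero] at h
  have h2 : (2 : 𝕜) • deriv f 0 = 0 := by
    rw [two_smul]; nth_rewrite 1 [h]; exact neg_add_cancel _
  exact (smul_eq_zero.mp h2).resolve_left two_ne_zero

lemma AnalyticAt.exists_eq_sq_smul {f : 𝕜 → E} (hf : AnalyticAt 𝕜 f 0) (h₀ : f 0 = 0)
    (h₁ : deriv f 0 = 0) : ∃ F : 𝕜 → E, AnalyticAt 𝕜 F 0 ∧ ∀ z, f z = z ^ 2 • F z := by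
  obtain ⟨p, hp⟩ := hf
  refine ⟨_, ⟨_, hp.has_fpower_series_iterate_dslope_fslope 2⟩, fun z => ?_⟩
  rw [← pow_sub_smul_iterate_dslope_of_zero (f := f) 2 (fun k hk => ?_) z, sub_zero]
  interval_cases k
  · exact h₀
  · simpa [dslope_same] using h₁

lemma Filter.EventuallyEq.deriv_nhdsNE {f g : 𝕜 → E} {x : 𝕜} (h : f =ᶠ[𝓝[≠] x] g) :
    deriv f =ᶠ[𝓝[≠] x] deriv g := by
  filter_upwards [eventually_eventually_nhdsWithin.mpr h, self_mem_nhdsWithin] with y hy hyx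
  rw [isOpen_compl_singleton.nhdsWithin_eq hyx] at hy
  exact Filter.EventuallyEq.deriv_eq hy

lemma isBigO_pow_mul {F : 𝕜 → 𝕜} (hF : ContinuousAt F 0) (n : ℕ) :
    (fun z => z ^ n * F z) =O[𝓝[≠] 0] fun z => z ^ n := by
  simpa using ((isBigO_refl (fun z : 𝕜 => z ^ n) (𝓝 0)).mul
    (hF.tendsto.isBigO_one 𝕜)).mono nhdsWithin_le_nhds

end

lemma eventuallyEq_of_sq_eq_of_tendsto {α 𝕜 : Type*} [NormedField 𝕜] [CharZero 𝕜]
    {l : Filter α} {f g : α → 𝕜} {a : 𝕜} (ha : a ≠ 0) (hf : Tendsto f l (𝓝 a))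
    (hg : Tendsto g l (𝓝 a)) (hsq : ∀ᶠ x in l, f x ^ 2 = g x ^ 2) : f =ᶠ[l] g := by
  have hsum : ∀ᶠ x in l, f x + g x ≠ 0 :=
    (hf.add hg).eventually_ne (by rw [← two_mul]; exact mul_ne_zero two_ne_zero ha)
  filter_upwards [hsum, hsq] with x hne hx
  have : (f x - g x) * (f x + g x) = 0 := by linear_combination hx
  exact sub_eq_zero.mp ((mul_eq_zero.mp this).resolve_right hne)

lemma linearIndependent_one_of_im_ne_zero {τ : ℂ} (hτ : τ.im ≠ 0) :
    LinearIndependent ℝ ![1, τ] := by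
  refine LinearIndependent.pair_iff.mpr fun s t h => ?_
  have ht : t = 0 := by simpa [hτ] using congrArg Complex.im h
  subst ht
  simpa using h

def periodPair (τ : ℂ) (hτ : 0 < τ.im) : PeriodPair :=
  ⟨1, τ, linearIndependent_one_of_im_ne_zero hτ.ne'⟩

lemma coe_lattice_periodPair {τ : ℂ} (hτ : 0 < τ.im) :
    ((periodPair τ hτ).lattice : Set ℂ) = lattice τ := by
  ext z
  simp [PeriodPair.mem_lattice, periodPair, lattice, eq_comm]

lemma wp_eq_inv_sq_add_weierstrassPExcept {τ : ℂ} (hτ : 0 < τ.im) (z : ℂ) :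
    wp τ z = 1 / z ^ 2 + (periodPair τ hτ).weierstrassPExcept 0 z := by
  set f : ℂ → ℂ := fun ω => 1 / (z - ω) ^ 2 - 1 / ω ^ 2
  calc wp τ z = 1 / z ^ 2 + ∑' ω : ℂ, {w | w ∈ lattice τ ∧ w ≠ 0}.indicator f ω := by
        rw [wp, ← tsum_subtype]; rfl
    _ = 1 / z ^ 2 + ∑' ω : ℂ, ((periodPair τ hτ).lattice : Set ℂ).indicator
          (fun ω => if ω = 0 then 0 else f ω) ω := by
        rw [coe_lattice_periodPair]
        congr 2; ext ω
        by_cases hω : ω ∈ lattice τ <;> by_cases hω₀ : ω = 0 <;> simp [Set.indicator, hω, hω₀]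
    _ = _ := by rw [← tsum_subtype]; rfl

lemma exists_analyticAt_wp_eq {τ : ℂ} (hτ : 0 < τ.im) :
    ∃ G : ℂ → ℂ, AnalyticAt ℂ G 0 ∧ ∀ z, wp τ z = 1 / z ^ 2 + z ^ 2 * G z := by
  set L := periodPair τ hτ
  have heven : ∀ z, L.weierstrassPExcept 0 (-z) = L.weierstrassPExcept 0 z := fun z => by
    rw [L.weierstrassPExcept_neg, neg_zero]
  obtain ⟨G, hG, hLG⟩ := (L.analyticAt_weierstrassPExcept 0).exists_eq_sq_smul
    (L.weierstrassPExcept_zero 0) (deriv_zero_of_even heven)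
  exact ⟨G, hG, fun z => by rw [wp_eq_inv_sq_add_weierstrassPExcept hτ, hLG, smul_eq_mul]⟩

section SquareRoot

variable {c : ℂ} {G : ℂ → ℂ}

noncomputable def rootFactor (c : ℂ) (G : ℂ → ℂ) (z : ℂ) : ℂ :=
  (1 - c * z ^ 2 + z ^ 4 * G z) ^ (2⁻¹ : ℂ)

-- `(ψ - a)(ψ + a) = ψ² - a² = z⁴(G - c²/4)` for `ψ = rootFactor c G` and `a = 1 - c z²/2`.
noncomputable def rootRemainder (c : ℂ) (G : ℂ → ℂ) (z : ℂ) : ℂ :=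
  (G z - c ^ 2 / 4) / (rootFactor c G z + (1 - c / 2 * z ^ 2))

lemma rootFactor_sq (z : ℂ) : rootFactor c G z ^ 2 = 1 - c * z ^ 2 + z ^ 4 * G z :=
  Complex.cpow_ofNat_inv_pow _ 2

@[simp] lemma rootFactor_zero : rootFactor c G 0 = 1 := by simp [rootFactor]

lemma analyticAt_rootFactor (hG : AnalyticAt ℂ G 0) : AnalyticAt ℂ (rootFactor c G) 0 := by
  refine AnalyticAt.cpow (by fun_prop) analyticAt_const ?_
  simp

lemma analyticAt_rootRemainder (hG : AnalyticAt ℂ G 0) :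
    AnalyticAt ℂ (rootRemainder c G) 0 := by
  have hψ := analyticAt_rootFactor (c := c) hG
  refine (hG.sub analyticAt_const).div (by fun_prop) ?_
  norm_num

lemma rootFactor_eventually_eq (hG : AnalyticAt ℂ G 0) :
    ∀ᶠ z in 𝓝 0, rootFactor c G z = 1 - c / 2 * z ^ 2 + z ^ 4 * rootRemainder c G z := by
  have hden : ∀ᶠ z in 𝓝 (0 : ℂ), rootFactor c G z + (1 - c / 2 * z ^ 2) ≠ 0 := by
    refine ContinuousAt.eventually_ne ?_ (by norm_num)
    exact ((analyticAt_rootFactor hG).add (by fun_prop)).continuousAt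
  filter_upwards [hden] with z hz
  rw [rootRemainder, ← sub_eq_iff_eq_add', mul_div_assoc', eq_div_iff hz]
  linear_combination rootFactor_sq (c := c) (G := G) z

end SquareRoot

section Kappa

variable {c : ℂ} {G p : ℂ → ℂ}

noncomputable def kappa (c : ℂ) (G : ℂ → ℂ) (z : ℂ) : ℂ := rootFactor c G z / z

lemma kappa_sq (hp : ∀ z ≠ 0, p z = 1 / z ^ 2 + z ^ 2 * G z) {z : ℂ} (hz : z ≠ 0) :
    kappa c G z ^ 2 = p z - c := by
  rw [kappa, div_pow, rootFactor_sq, hp z hz]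
  field_simp
  ring

lemma tendsto_mul_kappa (hG : AnalyticAt ℂ G 0) :
    Tendsto (fun z => z * kappa c G z) (𝓝[≠] 0) (𝓝 1) := by
  have h := (analyticAt_rootFactor (c := c) hG).continuousAt.tendsto
  rw [rootFactor_zero] at h
  refine (h.mono_left nhdsWithin_le_nhds).congr' ?_
  filter_upwards [self_mem_nhdsWithin] with z hz
  exact (mul_div_cancel₀ _ hz).symm

lemma exists_sqrt_sub (hG : AnalyticAt ℂ G 0) (hp : ∀ z ≠ 0, p z = 1 / z ^ 2 + z ^ 2 * G z)
    (c : ℂ) : ∃ ε > (0 : ℝ), ∃ κ : ℂ → ℂ,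
      DifferentiableOn ℂ κ (ball 0 ε \ {0}) ∧ (∀ z ∈ ball 0 ε \ {0}, κ z ^ 2 = p z - c) ∧
      Tendsto (fun z => z * κ z) (𝓝[≠] 0) (𝓝 1) := by
  obtain ⟨ε, hε, hball⟩ := Metric.eventually_nhds_iff_ball.mp
    (analyticAt_rootFactor (c := c) hG).eventually_analyticAt
  refine ⟨ε, hε, kappa c G, fun z hz => ?_, fun z hz => kappa_sq hp hz.2,
    tendsto_mul_kappa hG⟩
  exact ((hball z hz.1).differentiableAt.div differentiableAt_id hz.2).differentiableWithinAt

lemma kappa_eventuallyEq (hG : AnalyticAt ℂ G 0) :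
    kappa c G =ᶠ[𝓝[≠] 0] fun z => 1 / z - c / 2 * z + z ^ 3 * rootRemainder c G z := by
  filter_upwards [nhdsWithin_le_nhds (rootFactor_eventually_eq hG), self_mem_nhdsWithin]
    with z h hz
  rw [kappa, h]
  field_simp

lemma deriv_kappa_eventuallyEq (hG : AnalyticAt ℂ G 0) :
    deriv (kappa c G) =ᶠ[𝓝[≠] 0] fun z => -1 / z ^ 2 - c / 2 +
      z ^ 2 * (3 * rootRemainder c G z + z * deriv (rootRemainder c G) z) := by
  filter_upwards [(kappa_eventuallyEq hG).deriv_nhdsNE, self_mem_nhdsWithin,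
    nhdsWithin_le_nhds (analyticAt_rootRemainder (c := c) hG).eventually_analyticAt]
    with z h hz hB
  have hinv : HasDerivAt (fun w : ℂ => 1 / w) (-1 / z ^ 2) z := by
    simpa [one_div, neg_div] using hasDerivAt_inv hz
  have hlin : HasDerivAt (fun w : ℂ => c / 2 * w) (c / 2) z := by
    simpa using (hasDerivAt_id z).const_mul (c / 2)
  have hcube : HasDerivAt (fun w => w ^ 3 * rootRemainder c G w)
      (3 * z ^ 2 * rootRemainder c G z + z ^ 3 * deriv (rootRemainder c G) z) z := by
    simpa using (hasDerivAt_pow 3 z).fun_mul hB.differentiableAt.hasDerivAt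
  rw [h, ((hinv.fun_sub hlin).fun_add hcube).deriv]
  ring

lemma isBigO_kappa_sub (hG : AnalyticAt ℂ G 0) :
    (fun z => kappa c G z - (1 / z - c / 2 * z)) =O[𝓝[≠] 0] fun z => z ^ 3 := by
  refine (isBigO_pow_mul (analyticAt_rootRemainder (c := c) hG).continuousAt 3).congr' ?_ .rfl
  filter_upwards [kappa_eventuallyEq hG] with z h
  rw [h]
  ring

lemma isBigO_add_deriv_kappa (hG : AnalyticAt ℂ G 0)
    (hp : ∀ z ≠ 0, p z = 1 / z ^ 2 + z ^ 2 * G z) :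
    (fun z => p z + deriv (kappa c G) z - (-c / 2)) =O[𝓝[≠] 0] fun z => z ^ 2 := by
  have hB := analyticAt_rootRemainder (c := c) hG
  have hF : ContinuousAt
      (fun z => G z + (3 * rootRemainder c G z + z * deriv (rootRemainder c G) z)) 0 :=
    hG.continuousAt.add ((continuousAt_const.mul hB.continuousAt).add
      (continuousAt_id.mul hB.deriv.continuousAt))
  refine (isBigO_pow_mul hF 2).congr' ?_ .rfl
  filter_upwards [deriv_kappa_eventuallyEq hG, self_mem_nhdsWithin] with z h hz
  rw [h, hp z hz]
  ring

theorem isBigO_of_sq_eq_sub (hG : AnalyticAt ℂ G 0)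
    (hp : ∀ z ≠ 0, p z = 1 / z ^ 2 + z ^ 2 * G z) {κ : ℂ → ℂ}
    (hsq : ∀ᶠ z in 𝓝[≠] 0, κ z ^ 2 = p z - c)
    (hlim : Tendsto (fun z => z * κ z) (𝓝[≠] 0) (𝓝 1)) :
    ((fun z => κ z - (1 / z - c / 2 * z)) =O[𝓝[≠] 0] fun z => z ^ 3) ∧
    ((fun z => p z + deriv κ z - (-c / 2)) =O[𝓝[≠] 0] fun z => z ^ 2) := by
  have hmul := eventuallyEq_of_sq_eq_of_tendsto one_ne_zero hlim (tendsto_mul_kappa hG) <| by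
    filter_upwards [hsq, self_mem_nhdsWithin] with z h hz
    rw [mul_pow, mul_pow, h, kappa_sq hp hz]
  have hκ : κ =ᶠ[𝓝[≠] 0] kappa c G := by
    filter_upwards [hmul, self_mem_nhdsWithin] with z h hz
    exact mul_left_cancel₀ hz h
  refine ⟨(isBigO_kappa_sub (c := c) hG).congr' ?_ .rfl,
    (isBigO_add_deriv_kappa (c := c) hG hp).congr' ?_ .rfl⟩
  · filter_upwards [hκ] with z h
    rw [h]
  · filter_upwards [hκ.deriv_nhdsNE] with z h
    rw [h]

end Kappa

theorem stmt2_general (τ : ℂ) (hτ : 0 < τ.im) (u : ℂ) :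
    (∃ ε > (0 : ℝ), ∃ κ : ℂ → ℂ,
      DifferentiableOn ℂ κ (ball (0 : ℂ) ε \ {0}) ∧
      (∀ z ∈ ball (0 : ℂ) ε \ {0}, κ z ^ 2 = wp τ z - wp τ u) ∧
      Tendsto (fun z => z * κ z) (𝓝[≠] (0 : ℂ)) (𝓝 1)) ∧
    (∀ ε > (0 : ℝ), ∀ κ : ℂ → ℂ,
      DifferentiableOn ℂ κ (ball (0 : ℂ) ε \ {0}) →
      (∀ z ∈ ball (0 : ℂ) ε \ {0}, κ z ^ 2 = wp τ z - wp τ u) →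
      Tendsto (fun z => z * κ z) (𝓝[≠] (0 : ℂ)) (𝓝 1) →
      ((fun z => κ z - (1 / z - wp τ u / 2 * z)) =O[𝓝[≠] (0 : ℂ)] fun z => z ^ 3) ∧
      ((fun z => wp τ z + deriv κ z - (-(wp τ u) / 2)) =O[𝓝[≠] (0 : ℂ)] fun z => z ^ 2)) := by
  obtain ⟨G, hG, hwp⟩ := exists_analyticAt_wp_eq hτ
  have hp : ∀ z ≠ 0, wp τ z = 1 / z ^ 2 + z ^ 2 * G z := fun z _ => hwp z
  refine ⟨exists_sqrt_sub hG hp _, fun ε hε κ _ hsq hlim => isBigO_of_sq_eq_sub hG hp ?_ hlim⟩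
  filter_upwards [sdiff_mem_nhdsWithin_compl (ball_mem_nhds 0 hε) {0}] with z hz
  exact hsq z hz

/-- Near `z = 0` there is a holomorphic square root `κ` of `℘(z) − ℘(u)` with
`z·κ(z) → 1`, and any such `κ` satisfies `κ(z) = 1/z − (℘(u)/2)z + O(z³)` and
`℘(z) + κ′(z) = −℘(u)/2 + O(z²)`. -/
theorem stmt2 (τ : ℂ) (hτ : 0 < τ.im) (u : ℂ)
    (hu2 : 2 * u ∈ lattice τ) (hu : u ∉ lattice τ) :
    (∃ ε > (0 : ℝ), ∃ κ : ℂ → ℂ,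
      DifferentiableOn ℂ κ (ball (0 : ℂ) ε \ {0}) ∧
      (∀ z ∈ ball (0 : ℂ) ε \ {0}, κ z ^ 2 = wp τ z - wp τ u) ∧
      Tendsto (fun z => z * κ z) (𝓝[≠] (0 : ℂ)) (𝓝 1)) ∧
    (∀ ε > (0 : ℝ), ∀ κ : ℂ → ℂ,
      DifferentiableOn ℂ κ (ball (0 : ℂ) ε \ {0}) →
      (∀ z ∈ ball (0 : ℂ) ε \ {0}, κ z ^ 2 = wp τ z - wp τ u) →
      Tendsto (fun z => z * κ z) (𝓝[≠] (0 : ℂ)) (𝓝 1) →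
      ((fun z => κ z - (1 / z - wp τ u / 2 * z)) =O[𝓝[≠] (0 : ℂ)] fun z => z ^ 3) ∧
      ((fun z => wp τ z + deriv κ z - (-(wp τ u) / 2)) =O[𝓝[≠] (0 : ℂ)] fun z => z ^ 2)) :=
  stmt2_general τ hτ u
end

section
/- Let A = ℂ[z₁, z₂, t]/(z₁z₂ − t²). Let M be the quotient of the free A-module A·e₁ ⊕ A·e₂ by the submodule generated by z₂·e₁ − t·e₂ and z₁·e₂ − t·e₁. Then the A-linear map A·e₁ ⊕ A·e₂ → A sending e₁ to z₁ + t and e₂ to z₂ + t annihilates both relations, and the induced A-linear map M → A is injective with image the ideal generated by z₁ + t and z₂ + t; in particular, M is isomorphic as an A-module to the ideal (z₁ + t, z₂ + t) ⊆ A. -/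
open MvPolynomial

/-- `A = ℂ[z₁, z₂, t] / (z₁z₂ − t²)`. -/
abbrev Anode : Type :=
  MvPolynomial (Fin 3) ℂ ⧸
    Ideal.span ({X 0 * X 1 - X 2 ^ 2} : Set (MvPolynomial (Fin 3) ℂ))

noncomputable def z₁ : Anode :=
  Ideal.Quotient.mk (Ideal.span ({X 0 * X 1 - X 2 ^ 2} : Set (MvPolynomial (Fin 3) ℂ))) (X 0)

noncomputable def z₂ : Anode :=
  Ideal.Quotient.mk (Ideal.span ({X 0 * X 1 - X 2 ^ 2} : Set (MvPolynomial (Fin 3) ℂ))) (X 1)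

noncomputable def tA : Anode :=
  Ideal.Quotient.mk (Ideal.span ({X 0 * X 1 - X 2 ^ 2} : Set (MvPolynomial (Fin 3) ℂ))) (X 2)

/-- The `A`-linear map `A·e₁ ⊕ A·e₂ → A`, `e₁ ↦ z₁ + t`, `e₂ ↦ z₂ + t`. -/
noncomputable def φnode : Anode × Anode →ₗ[Anode] Anode :=
  (LinearMap.toSpanSingleton Anode Anode (z₁ + tA)).coprod
    (LinearMap.toSpanSingleton Anode Anode (z₂ + tA))

/-! Put `u = z₁ + t` and `v = z₂ + t` in `ℂ[z₁, z₂, t]`. Then `z₁z₂ − t² = z₂u − tv`, so a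
relation `au + bv ≡ 0` modulo `z₁z₂ − t²` lifts to `(a − pz₂)u + (b + pt)v = 0` for some `p`.
As `v` is prime and does not divide `u`, every such syzygy is a multiple of the Koszul syzygy
`(v, −u)`, which is the difference of the two given relations `(z₂, −t)` and `(−t, z₁)`. -/

theorem prime_X_add_X {σ K : Type*} [Field K] {i j : σ} (hij : i ≠ j) :
    Prime (X i + X j : MvPolynomial σ K) := by
  classical
  have hcoeff : (X i + X j : MvPolynomial σ K).coeff (Finsupp.single i 1) = 1 := by
    simp [coeff_X, Finsupp.single_left_inj one_ne_zero, hij.symm]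
  refine UniqueFactorizationMonoid.irreducible_iff_prime.mp
    (irreducible_of_totalDegree_eq_one (le_antisymm ?_ ?_) fun x hx => ?_)
  · exact (totalDegree_add _ _).trans (by simp)
  · have := le_totalDegree (mem_support_iff.mpr (hcoeff ▸ one_ne_zero))
    rwa [Finsupp.sum_single_index rfl] at this
  · exact isUnit_of_dvd_one (hcoeff ▸ hx _)

theorem Prime.exists_eq_mul_of_mul_add_mul_eq_zero {R : Type*} [CommRing R] [IsDomain R]
    {u v a b : R} (hv : Prime v) (hvu : ¬ v ∣ u) (h : a * u + b * v = 0) :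
    ∃ c, a = c * v ∧ b = -(c * u) := by
  obtain ⟨c, rfl⟩ : v ∣ a :=
    (hv.dvd_or_dvd ⟨-b, by linear_combination h⟩).resolve_right hvu
  refine ⟨c, mul_comm _ _, mul_left_cancel₀ hv.ne_zero ?_⟩
  linear_combination h

section

variable {R : Type*} [CommRing R]

theorem range_coprod_toSpanSingleton (u v : R) :
    LinearMap.range ((LinearMap.toSpanSingleton R R u).coprod (LinearMap.toSpanSingleton R R v)) =
      Ideal.span {u, v} := by
  rw [LinearMap.range_coprod, ← LinearMap.span_singleton_eq_range,
    ← LinearMap.span_singleton_eq_range, Ideal.span_insert]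

theorem ker_coprod_toSpanSingleton_mk {u v : R}
    (hK : ∀ a b : R, a * u + b * v = 0 → ∃ c, a = c * v ∧ b = -(c * u))
    {a₀ b₀ : R} {I : Ideal R} (hI : I = Ideal.span {a₀ * u + b₀ * v}) :
    LinearMap.ker ((LinearMap.toSpanSingleton _ _ (Ideal.Quotient.mk I u)).coprod
        (LinearMap.toSpanSingleton _ _ (Ideal.Quotient.mk I v))) =
      Submodule.span _ {(Ideal.Quotient.mk I a₀, Ideal.Quotient.mk I b₀),
        (Ideal.Quotient.mk I v, -Ideal.Quotient.mk I u)} := by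
  set π := Ideal.Quotient.mk I
  have hφ (a b : R) : (LinearMap.toSpanSingleton _ _ (π u)).coprod
      (LinearMap.toSpanSingleton _ _ (π v)) (π a, π b) = π (a * u + b * v) := by
    simp
  apply le_antisymm
  · rintro ⟨a', b'⟩ hab
    obtain ⟨a, rfl⟩ := Ideal.Quotient.mk_surjective a'
    obtain ⟨b, rfl⟩ := Ideal.Quotient.mk_surjective b'
    rw [LinearMap.mem_ker, hφ, Ideal.Quotient.eq_zero_iff_mem, hI,
      Ideal.mem_span_singleton'] at hab
    obtain ⟨p, hp⟩ := hab
    obtain ⟨c, hca, hcb⟩ := hK (a - p * a₀) (b - p * b₀) (by linear_combination -hp)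
    refine Submodule.mem_span_pair.mpr ⟨π p, π c, ?_⟩
    simp only [Prod.smul_mk, smul_eq_mul, Prod.mk_add_mk, ← map_mul, ← map_neg, ← map_add]
    congr 2
    · linear_combination -hca
    · linear_combination -hcb
  · rw [Submodule.span_le, Set.insert_subset_iff, Set.singleton_subset_iff]
    refine ⟨?_, ?_⟩
    · rw [SetLike.mem_coe, LinearMap.mem_ker, hφ, Ideal.Quotient.eq_zero_iff_mem, hI]
      exact Ideal.mem_span_singleton_self _
    · rw [SetLike.mem_coe, LinearMap.mem_ker, ← map_neg, hφ]
      simp [mul_comm]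

end

theorem Submodule.span_pair_sub_right' {R M : Type*} [Ring R] [AddCommGroup M] [Module R M]
    (x y : M) : span R {x, x - y} = span R {x, y} := by
  refine le_antisymm (span_le.mpr ?_) (span_le.mpr ?_) <;>
    rw [Set.insert_subset_iff, Set.singleton_subset_iff]
  · exact ⟨subset_span (by simp), sub_mem (subset_span (by simp)) (subset_span (by simp))⟩
  · refine ⟨subset_span (by simp), ?_⟩
    simpa using sub_mem (subset_span (by simp) : x ∈ span R {x, x - y})
      (subset_span (by simp) : x - y ∈ span R {x, x - y})

theorem ker_φnode :
    LinearMap.ker φnode =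
      Submodule.span Anode ({(z₂, -tA), (-tA, z₁)} : Set (Anode × Anode)) := by
  have hφ : φnode = (LinearMap.toSpanSingleton Anode Anode (Ideal.Quotient.mk _ (X 0 + X 2))).coprod
      (LinearMap.toSpanSingleton Anode Anode (Ideal.Quotient.mk _ (X 1 + X 2))) := by
    simp only [φnode, z₁, z₂, tA, map_add]
  have hndvd : ¬ (X 1 + X 2 : MvPolynomial (Fin 3) ℂ) ∣ X 0 + X 2 := by
    rintro ⟨q, hq⟩
    simpa using congrArg (eval ![1, 0, 0]) hq
  rw [hφ, ker_coprod_toSpanSingleton_mk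
    (fun a b => (prime_X_add_X (by decide)).exists_eq_mul_of_mul_add_mul_eq_zero hndvd)
    (a₀ := X 1) (b₀ := -X 2) (by congr 2; ring), ← Submodule.span_pair_sub_right']
  simp [z₁, z₂, tA]

/-- The map `e₁ ↦ z₁ + t`, `e₂ ↦ z₂ + t` kills the relations `z₂e₁ − te₂` and
`z₁e₂ − te₁`, its kernel is exactly the submodule generated by those relations
(so the induced map `M → A` is injective), its image is the ideal
`(z₁ + t, z₂ + t)`, and hence `M ≅ (z₁ + t, z₂ + t)` as `A`-modules. -/
theorem stmt9 :
    φnode (z₂, -tA) = 0 ∧ φnode (-tA, z₁) = 0 ∧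
    LinearMap.ker φnode =
      Submodule.span Anode ({(z₂, -tA), (-tA, z₁)} : Set (Anode × Anode)) ∧
    LinearMap.range φnode = (Ideal.span {z₁ + tA, z₂ + tA} : Ideal Anode) ∧
    Nonempty
      (((Anode × Anode) ⧸
          Submodule.span Anode ({(z₂, -tA), (-tA, z₁)} : Set (Anode × Anode))) ≃ₗ[Anode]
        (Ideal.span {z₁ + tA, z₂ + tA} : Ideal Anode)) := by
  have hrange : LinearMap.range φnode = Ideal.span {z₁ + tA, z₂ + tA} :=
    range_coprod_toSpanSingleton _ _
  have hrel (x : Anode × Anode) (hx : x ∈ ({(z₂, -tA), (-tA, z₁)} : Set (Anode × Anode))) :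
      φnode x = 0 :=
    LinearMap.mem_ker.mp (ker_φnode ▸ Submodule.subset_span hx)
  exact ⟨hrel _ (by simp), hrel _ (by simp), ker_φnode, hrange,
    ⟨(Submodule.quotEquivOfEq _ _ ker_φnode.symm).trans
      (φnode.quotKerEquivRange.trans (LinearEquiv.ofEq _ _ hrange))⟩⟩
end
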